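/- arXiv:quant-ph/0304077 — 3 statements merged into one kernel-verified Lean document; each statement's English description precedes it below -/
import Mathlib

section
/- Let Π_1, …, Π_m be positive semidefinite Hermitian n×n complex matrices with ∑_{i=1}^m Π_i = I_n. If ∑_{i=1}^m rank(Π_i) ≤ n, then each Π_i is an orthogonal projection (Hermitian with Π_i² = Π_i), Π_i Π_j = 0 for all i ≠ j, and ∑_{i=1}^m rank(Π_i) = n; in particular ℂ^n is the direct sum of the ranges of the Π_i. -/
open Matrix ComplexOrder

/-- If positive semidefinite matrices `P 1, …, P m` sum to the identity and their ranks
sum to at most `n`, then each `P i` is an orthogonal projection (Hermitian idempotent),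
`P i * P j = 0` for `i ≠ j`, the ranks sum to exactly `n`, and `ℂ^n` is the (internal)
direct sum of the ranges of the `P i`. -/
theorem posSemidef_resolution_rank_le_is_von_neumann {n m : ℕ}
    (P : Fin m → Matrix (Fin n) (Fin n) ℂ)
    (hPpos : ∀ i, (P i).PosSemidef)
    (hPsum : ∑ i, P i = 1)
    (hrank : ∑ i, (P i).rank ≤ n) :
    (∀ i, (P i).IsHermitian ∧ P i * P i = P i) ∧
    (∀ i j, i ≠ j → P i * P j = 0) ∧
    (∑ i, (P i).rank = n) ∧
    DirectSum.IsInternal (fun i => LinearMap.range (P i).mulVecLin) := by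
  classical
  set V : Fin m → Submodule ℂ (Fin n → ℂ) := fun i => LinearMap.range (P i).mulVecLin with hV
  -- sum of mulVecs
  have hsumv : ∀ x : Fin n → ℂ, ∑ i, P i *ᵥ x = x := by
    intro x
    have h1 : (∑ i, P i) *ᵥ x = ∑ i, P i *ᵥ x :=
      map_sum (AddMonoidHom.mk' (fun A : Matrix (Fin n) (Fin n) ℂ => A *ᵥ x)
        (fun A B => add_mulVec A B x)) P Finset.univ
    rw [← h1, hPsum, one_mulVec]
  -- the supremum of the ranges is everything
  have htop : (⨆ i, V i) = ⊤ := by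
    rw [eq_top_iff]
    intro x _
    rw [← hsumv x]
    exact Submodule.sum_mem _ fun i _ =>
      Submodule.mem_iSup_of_mem i ⟨x, rfl⟩
  -- the canonical map is surjective
  have hsurj : Function.Surjective (DirectSum.coeLinearMap V) := by
    rw [← LinearMap.range_eq_top, DirectSum.range_coeLinearMap, htop]
  -- finrank of the direct sum
  haveI : Module.Finite ℂ (DirectSum (Fin m) fun i => V i) :=
    Module.Finite.equiv (DirectSum.linearEquivFunOnFintype ℂ (Fin m) fun i => V i).symm
  have hfr : Module.finrank ℂ (DirectSum (Fin m) fun i => V i) = ∑ i, (P i).rank := by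
    rw [Module.finrank_directSum]
    rfl
  have hrk := LinearMap.finrank_range_add_finrank_ker (K := ℂ) (V := DirectSum (Fin m) fun i => V i)
    (V₂ := Fin n → ℂ) (DirectSum.coeLinearMap V)
  rw [LinearMap.range_eq_top.mpr hsurj, finrank_top, hfr] at hrk
  have hfn : Module.finrank ℂ (Fin n → ℂ) = n := by simp
  rw [hfn] at hrk
  have hker0 : Module.finrank ℂ (LinearMap.ker (DirectSum.coeLinearMap V)) = 0 := by omega
  have hranksum : ∑ i, (P i).rank = n := by omega
  have hinj : Function.Injective (DirectSum.coeLinearMap V) := by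
    exact (LinearMap.injective_iff_surjective_of_finrank_eq_finrank (K := ℂ)
      (V := DirectSum (Fin m) fun i => V i) (V₂ := Fin n → ℂ) (by rw [hfr, hfn, hranksum])
      (f := DirectSum.coeLinearMap V)).mpr hsurj
  -- key pointwise fact
  have key : ∀ (j i : Fin m) (y : Fin n → ℂ),
      P i *ᵥ (P j *ᵥ y) = if i = j then P j *ᵥ y else 0 := by
    intro j i y
    set z := P j *ᵥ y with hz
    have hmem : ∀ k, P k *ᵥ z ∈ V k := fun k => ⟨z, rfl⟩
    set a : DirectSum (Fin m) fun k => V k :=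
      ∑ k, DirectSum.of (fun k => V k) k ⟨P k *ᵥ z, hmem k⟩ with ha
    set b : DirectSum (Fin m) fun k => V k := DirectSum.of (fun k => V k) j ⟨z, ⟨y, rfl⟩⟩ with hb
    have hab : DirectSum.coeLinearMap V a = DirectSum.coeLinearMap V b := by
      rw [ha, hb, map_sum]
      simp only [DirectSum.coeLinearMap_of]
      exact hsumv z
    have hab' : a = b := hinj hab
    have hcomp : (a i : Fin n → ℂ) = P i *ᵥ z := by
      rw [ha]
      rw [DFinsupp.finset_sum_apply]
      rw [Finset.sum_eq_single i]
      · rw [DirectSum.of_eq_same]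
      · intro k _ hk
        rw [DirectSum.of_eq_of_ne _ _ _ hk.symm]
      · intro h; exact absurd (Finset.mem_univ i) h
    have hcomp' : (b i : Fin n → ℂ) = if i = j then z else 0 := by
      rw [hb]
      by_cases h : i = j
      · subst h; rw [DirectSum.of_eq_same, if_pos rfl]
      · rw [DirectSum.of_eq_of_ne _ _ _ h, if_neg h]
        rfl
    rw [← hcomp, hab', hcomp']
  -- matrix products
  have hmul : ∀ j i : Fin m, P i * P j = if i = j then P j else 0 := by
    intro j i
    ext a b
    have h := congrFun (key j i (Pi.single b 1)) a
    rw [mulVec_mulVec] at h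
    simp only [mulVec_single, mul_one] at h
    split_ifs at h with hij <;> simp [hij] at h ⊢ <;> simp [h]
  refine ⟨fun i => ⟨(hPpos i).1, by simpa using hmul i i⟩,
    fun i j hij => by simpa [hij] using hmul j i, hranksum, ?_⟩
  -- internal direct sum
  have : ⇑(DirectSum.coeAddMonoidHom V) = ⇑(DirectSum.coeLinearMap V) := by
    funext x
    rw [DirectSum.coeAddMonoidHom_eq_dfinsuppSum, DirectSum.coeLinearMap_eq_dfinsuppSum]
  show Function.Bijective (DirectSum.coeAddMonoidHom V)
  rw [this]
  exact ⟨hinj, hsurj⟩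
end

section
/- Let X be a positive definite Hermitian n×n complex matrix, let ρ be a positive semidefinite Hermitian n×n matrix with X − ρ positive semidefinite, and let Π be a positive semidefinite Hermitian n×n matrix satisfying (X − ρ) Π = 0. Then rank(Π) ≤ rank(ρ). -/
open Matrix ComplexOrder

/-- If `X` is positive definite, `ρ` is positive semidefinite with `X - ρ` positive
semidefinite, and `P` is positive semidefinite with `(X - ρ) * P = 0`, then
`rank P ≤ rank ρ`. -/
theorem rank_le_of_posDef_annihilator {n : ℕ}
    (X ρ P : Matrix (Fin n) (Fin n) ℂ)
    (hX : X.PosDef)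
    (hρ : ρ.PosSemidef)
    (hXρ : (X - ρ).PosSemidef)
    (hP : P.PosSemidef)
    (hann : (X - ρ) * P = 0) :
    P.rank ≤ ρ.rank := by
  classical
  set K := LinearMap.ker (X - ρ).mulVecLin with hK
  -- range of P lies in K
  have hrange : LinearMap.range P.mulVecLin ≤ K := by
    rintro v ⟨w, rfl⟩
    simp only [hK, LinearMap.mem_ker, mulVecLin_apply]
    rw [mulVec_mulVec, hann, zero_mulVec]
  -- ρ restricted to K is injective
  let f : K →ₗ[ℂ] (Fin n → ℂ) := ρ.mulVecLin.comp K.subtype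
  have hinj : Function.Injective f := by
    rw [← LinearMap.ker_eq_bot]
    rw [LinearMap.ker_eq_bot']
    rintro ⟨v, hv⟩ hfv
    have hρv : ρ.mulVec v = 0 := by
      simpa [f] using hfv
    have hXv : (X - ρ).mulVec v = 0 := hv
    have hXv0 : X.mulVec v = 0 := by
      have := hXv
      rw [sub_mulVec, hρv, sub_zero] at this
      exact this
    have hv0 : v = 0 := by
      by_contra h
      have hpos := hX.dotProduct_mulVec_pos (x := v) h
      rw [hXv0] at hpos
      simp at hpos
    exact Subtype.ext hv0
  have h1 : P.rank ≤ Module.finrank ℂ K := by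
    rw [Matrix.rank]
    exact Submodule.finrank_mono hrange
  have h2 : Module.finrank ℂ K ≤ ρ.rank := by
    have := LinearMap.finrank_range_of_inj hinj
    rw [Matrix.rank, ← this]
    apply Submodule.finrank_mono
    rintro v ⟨w, rfl⟩
    exact ⟨w, rfl⟩
  exact le_trans h1 h2
end

section
/- Let ψ_1, …, ψ_m be complex matrices, where ψ_i has size n×r_i with ∑_{i=1}^m r_i = n, such that the n columns of all the ψ_i together form a linearly independent family (so the n×n matrix Ψ = [ψ_1 ψ_2 ⋯ ψ_m] is invertible). Then the least-squares measurement operators Σ_i = (Ψ Ψ*)^{−1/2} ψ_i ψ_i* (Ψ Ψ*)^{−1/2} satisfy Σ_i Σ_j = δ_{ij} Σ_i for all i, j; in particular each Σ_i is an orthogonal projection of rank r_i, the ranges of the Σ_i are mutually orthogonal, and ℂ^n is their orthogonal direct sum. -/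
open Matrix ComplexOrder

/-- The square root of a positive semidefinite matrix, as defined in Mathlib (Dec 2024)
(`Matrix.PosSemidef.sqrt`), which has since been removed. -/
noncomputable def Matrix.PosSemidef.sqrt {n 𝕜 : Type*} [Fintype n] [RCLike 𝕜] [DecidableEq n]
    {A : Matrix n n 𝕜} (hA : A.PosSemidef) : Matrix n n 𝕜 :=
  hA.1.eigenvectorUnitary.1 * diagonal ((↑) ∘ (√·) ∘ hA.1.eigenvalues) *
    (star hA.1.eigenvectorUnitary : Matrix n n 𝕜)

/-- **For linearly independent states the least-squares measurement is a Von Neumann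
measurement.** Let `ψ i` be `n × r i` complex matrices with `∑ i, r i = n` whose `n`
columns together form a linearly independent family, so that the `n × n` matrix
`Ψ = [ψ 1 ⋯ ψ m]` is invertible. Then the least-squares measurement operators
`Σ i = (Ψ * Ψᴴ)^{-1/2} * ψ i * (ψ i)ᴴ * (Ψ * Ψᴴ)^{-1/2}` satisfy
`Σ i * Σ j = δ_{ij} Σ i`; in particular each `Σ i` is an orthogonal projection of rank
`r i`, the ranges of the `Σ i` are mutually orthogonal, and `ℂ^n` is their orthogonal
direct sum. -/
theorem leastSquaresMeasurement_is_von_neumann {n m : ℕ} (r : Fin m → ℕ)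
    (hr : ∑ i, r i = n)
    (ψ : ∀ i, Matrix (Fin n) (Fin (r i)) ℂ)
    (Ψ : Matrix (Fin n) ((i : Fin m) × Fin (r i)) ℂ)
    (hΨ : Ψ = Matrix.of fun a j => ψ j.1 a j.2)
    (hind : LinearIndependent ℂ Ψᵀ)
    (Sg : Fin m → Matrix (Fin n) (Fin n) ℂ)
    (hSg : ∀ i, Sg i = (Matrix.PosSemidef.sqrt (Matrix.posSemidef_self_mul_conjTranspose Ψ))⁻¹ * ψ i *
        (ψ i)ᴴ * (Matrix.PosSemidef.sqrt (Matrix.posSemidef_self_mul_conjTranspose Ψ))⁻¹) :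
    (∀ i j, Sg i * Sg j = if i = j then Sg i else 0) ∧
    (∀ i, (Sg i).IsHermitian ∧ Sg i * Sg i = Sg i) ∧
    (∀ i, (Sg i).rank = r i) ∧
    (∀ i j, i ≠ j → ∀ x ∈ LinearMap.range (Sg i).mulVecLin,
      ∀ y ∈ LinearMap.range (Sg j).mulVecLin, star x ⬝ᵥ y = 0) ∧
    DirectSum.IsInternal (fun i => LinearMap.range (Sg i).mulVecLin) := by
  classical
  set S : Matrix (Fin n) (Fin n) ℂ := Matrix.PosSemidef.sqrt (Matrix.posSemidef_self_mul_conjTranspose Ψ) with hSdef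
  have hSH : S.IsHermitian := by
    have hA := Matrix.posSemidef_self_mul_conjTranspose Ψ
    have hD : (diagonal ((RCLike.ofReal : ℝ → ℂ) ∘ (√·) ∘ hA.1.eigenvalues)).IsHermitian :=
      isHermitian_diagonal_of_self_adjoint _ (by ext k; simp [Function.comp])
    have := isHermitian_mul_mul_conjTranspose (hA.1.eigenvectorUnitary : Matrix (Fin n) (Fin n) ℂ) hD
    rw [hSdef, Matrix.PosSemidef.sqrt, star_eq_conjTranspose]
    exact this
  have hSS : S * S = Ψ * Ψᴴ := by
    have hA := Matrix.posSemidef_self_mul_conjTranspose Ψ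
    have hU : (star hA.1.eigenvectorUnitary : Matrix (Fin n) (Fin n) ℂ) *
        hA.1.eigenvectorUnitary = 1 := Unitary.coe_star_mul_self _
    have hdd : diagonal ((RCLike.ofReal : ℝ → ℂ) ∘ (√·) ∘ hA.1.eigenvalues) *
        diagonal ((RCLike.ofReal : ℝ → ℂ) ∘ (√·) ∘ hA.1.eigenvalues) =
        diagonal (RCLike.ofReal ∘ hA.1.eigenvalues) := by
      rw [diagonal_mul_diagonal]; congr 1; funext k
      simp only [Function.comp]
      rw [← RCLike.ofReal_mul, Real.mul_self_sqrt (hA.eigenvalues_nonneg k)]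
    rw [hSdef, Matrix.PosSemidef.sqrt]
    conv_rhs => rw [hA.1.spectral_theorem, Unitary.conjStarAlgAut_apply, ← hdd]
    simp only [Matrix.mul_assoc]
    rw [← Matrix.mul_assoc (star hA.1.eigenvectorUnitary : Matrix (Fin n) (Fin n) ℂ), hU,
      Matrix.one_mul]
  -- reindexing equivalence
  have hcard : Fintype.card ((i : Fin m) × Fin (r i)) = n := by
    simp [Fintype.card_sigma, hr]
  let e : ((i : Fin m) × Fin (r i)) ≃ Fin n := Fintype.equivFinOfCardEq hcard
  -- the square reindexed matrix is invertible
  set Ψ' : Matrix (Fin n) (Fin n) ℂ := Ψ.submatrix id e.symm with hΨ'def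
  have hunit : IsUnit Ψ' := by
    rw [← Matrix.linearIndependent_cols_iff_isUnit]
    have : Ψ'.col = Ψᵀ ∘ e.symm := by
      funext k; rfl
    rw [this]
    exact hind.comp e.symm e.symm.injective
  have hPP' : Ψ' * Ψ'ᴴ = Ψ * Ψᴴ := by
    rw [hΨ'def, Matrix.conjTranspose_submatrix,
      Matrix.submatrix_mul_equiv Ψ Ψᴴ id e.symm id]
    rfl
  -- S is invertible
  have hdetS : IsUnit S.det := by
    have h1 : IsUnit (S * S).det := by
      rw [hSS, ← hPP', Matrix.det_mul]
      exact ((Matrix.isUnit_iff_isUnit_det _).mp hunit).mul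
        ((Matrix.isUnit_iff_isUnit_det _).mp ((Matrix.isUnit_conjTranspose Ψ').mpr hunit))
    rw [Matrix.det_mul] at h1
    exact isUnit_of_mul_isUnit_left h1
  have hSiH : (S⁻¹).IsHermitian := hSH.inv
  -- the unitary matrix μ
  set μ : Matrix (Fin n) ((i : Fin m) × Fin (r i)) ℂ := S⁻¹ * Ψ with hμdef
  have hμμ : μ * μᴴ = 1 := by
    rw [hμdef, Matrix.conjTranspose_mul, hSiH.eq]
    calc S⁻¹ * Ψ * (Ψᴴ * S⁻¹) = S⁻¹ * (Ψ * Ψᴴ) * S⁻¹ := by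
          simp only [Matrix.mul_assoc]
      _ = S⁻¹ * (S * S) * S⁻¹ := by rw [hSS]
      _ = (S⁻¹ * S) * (S * S⁻¹) := by simp only [Matrix.mul_assoc]
      _ = 1 := by rw [Matrix.nonsing_inv_mul _ hdetS, Matrix.mul_nonsing_inv _ hdetS, one_mul]
  have hμμ' : μᴴ * μ = 1 := by
    have h2 : (μ.submatrix id e.symm) * (μ.submatrix id e.symm)ᴴ = 1 := by
      rw [Matrix.conjTranspose_submatrix, Matrix.submatrix_mul_equiv μ μᴴ id e.symm id, hμμ]
      rfl
    have h3 : (μ.submatrix id e.symm)ᴴ * (μ.submatrix id e.symm) = 1 :=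
      mul_eq_one_comm.mp h2
    have h4 : (μᴴ * μ).submatrix e.symm e.symm = 1 := by
      rw [← h3, Matrix.conjTranspose_submatrix]
      exact (Matrix.submatrix_mul_equiv μᴴ μ e.symm (Equiv.refl _) e.symm).symm
    ext a b
    have := congrFun (congrFun h4 (e a)) (e b)
    simpa [Matrix.one_apply, e.injective.eq_iff] using this
  -- the blocks μᵢ
  set ν : ∀ i, Matrix (Fin n) (Fin (r i)) ℂ := fun i => S⁻¹ * ψ i with hνdef
  have hν : ∀ i a p, ν i a p = μ a ⟨i, p⟩ := by
    intro i a p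
    simp only [hνdef, hμdef, Matrix.mul_apply, hΨ, Matrix.of_apply]
  have hSg2 : ∀ i, Sg i = ν i * (ν i)ᴴ := by
    intro i
    rw [hSg i, hνdef, Matrix.conjTranspose_mul, hSiH.eq]
    simp only [Matrix.mul_assoc, hSdef]
  have hblock : ∀ i j (p : Fin (r i)) (q : Fin (r j)),
      ((ν i)ᴴ * ν j) p q = if (⟨i, p⟩ : (i : Fin m) × Fin (r i)) = ⟨j, q⟩ then 1 else 0 := by
    intro i j p q
    have : ((ν i)ᴴ * ν j) p q = (μᴴ * μ) ⟨i, p⟩ ⟨j, q⟩ := by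
      simp only [Matrix.mul_apply, Matrix.conjTranspose_apply, hν]
    rw [this, hμμ', Matrix.one_apply]
  have hii : ∀ i, (ν i)ᴴ * ν i = 1 := by
    intro i
    ext p q
    rw [hblock, Matrix.one_apply]
    simp
  have hij : ∀ i j, i ≠ j → (ν i)ᴴ * ν j = 0 := by
    intro i j hne
    ext p q
    rw [hblock]
    simp [hne]
  -- main multiplication identity
  have main : ∀ i j, Sg i * Sg j = if i = j then Sg i else 0 := by
    intro i j
    rcases eq_or_ne i j with rfl | hne
    · rw [if_pos rfl, hSg2]
      calc ν i * (ν i)ᴴ * (ν i * (ν i)ᴴ) = ν i * ((ν i)ᴴ * ν i) * (ν i)ᴴ := by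
            simp only [Matrix.mul_assoc]
        _ = ν i * (ν i)ᴴ := by rw [hii, Matrix.mul_one]
    · rw [if_neg hne, hSg2, hSg2]
      calc ν i * (ν i)ᴴ * (ν j * (ν j)ᴴ) = ν i * ((ν i)ᴴ * ν j) * (ν j)ᴴ := by
            simp only [Matrix.mul_assoc]
        _ = 0 := by rw [hij i j hne, Matrix.mul_zero, Matrix.zero_mul]
  have hherm : ∀ i, (Sg i).IsHermitian := by
    intro i; rw [hSg2]; exact Matrix.isHermitian_mul_conjTranspose_self _
  have hidem : ∀ i, Sg i * Sg i = Sg i := by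
    intro i; simpa using main i i
  have hrank : ∀ i, (Sg i).rank = r i := by
    intro i
    rw [hSg2, Matrix.rank_self_mul_conjTranspose]
    refine le_antisymm ((ν i).rank_le_card_width.trans_eq (Fintype.card_fin _)) ?_
    calc r i = ((1 : Matrix (Fin (r i)) (Fin (r i)) ℂ)).rank := by
          rw [Matrix.rank_one, Fintype.card_fin]
      _ = ((ν i)ᴴ * ν i).rank := by rw [hii]
      _ ≤ (ν i).rank := Matrix.rank_mul_le_right _ _
  -- orthogonality of ranges
  have horth : ∀ i j, i ≠ j → ∀ x ∈ LinearMap.range (Sg i).mulVecLin,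
      ∀ y ∈ LinearMap.range (Sg j).mulVecLin, star x ⬝ᵥ y = 0 := by
    intro i j hne x hx y hy
    obtain ⟨u, rfl⟩ := hx
    obtain ⟨v, rfl⟩ := hy
    simp only [Matrix.mulVecLin_apply]
    rw [Matrix.star_mulVec, Matrix.dotProduct_mulVec, Matrix.vecMul_vecMul,
      (hherm i).eq, ← Matrix.vecMul_vecMul, ← Matrix.dotProduct_mulVec,
      ← Matrix.dotProduct_mulVec, Matrix.mulVec_mulVec]
    rw [main i j, if_neg hne]
    simp
  -- sum of the projections is the identity
  have hsum : ∑ i, Sg i = 1 := by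
    have : ∑ i, Sg i = μ * μᴴ := by
      ext a b
      simp only [Matrix.sum_apply, hSg2, Matrix.mul_apply, Matrix.conjTranspose_apply, hν]
      rw [Finset.sum_sigma' Finset.univ (fun _ => Finset.univ)
        (fun i p => μ a ⟨i, p⟩ * star (μ b ⟨i, p⟩)), Finset.univ_sigma_univ]
    rw [this, hμμ]
  refine ⟨main, fun i => ⟨hherm i, hidem i⟩, hrank, horth, ?_⟩
  rw [DirectSum.isInternal_submodule_iff_iSupIndep_and_iSup_eq_top]
  constructor
  · intro i
    rw [Submodule.disjoint_def]
    intro x hx hx'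
    obtain ⟨u, rfl⟩ := hx
    have hker : (⨆ j, ⨆ (_ : j ≠ i), LinearMap.range (Sg j).mulVecLin) ≤
        LinearMap.ker (Sg i).mulVecLin := by
      refine iSup_le fun j => iSup_le fun hji => ?_
      rintro y ⟨v, rfl⟩
      simp only [LinearMap.mem_ker, Matrix.mulVecLin_apply, Matrix.mulVec_mulVec]
      rw [main i j, if_neg (Ne.symm hji)]
      simp
    have h0 : (Sg i).mulVecLin ((Sg i).mulVecLin u) = 0 := hker hx'
    simp only [Matrix.mulVecLin_apply, Matrix.mulVec_mulVec, hidem i] at h0 ⊢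
    exact h0
  · rw [eq_top_iff]
    intro x _
    have hx : x = ∑ i, Sg i *ᵥ x := by
      have h2 : ∑ i, Sg i *ᵥ x = (∑ i, Sg i) *ᵥ x := by
        ext a
        simp only [Matrix.mulVec, dotProduct, Matrix.sum_apply, Finset.sum_mul,
          Finset.sum_apply]
        rw [Finset.sum_comm]
      rw [h2, hsum, Matrix.one_mulVec]
    rw [hx]
    exact Submodule.sum_mem _ fun i _ =>
      Submodule.mem_iSup_of_mem i ⟨x, rfl⟩
end
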